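/- (Four invariant parallel spinors for example (1).) Fix t > 0 and let the connection matrices of example (1) be A₁ = −t(E₁₇+E₃₅), A₃ = −t(E₁₅−E₃₇), A₅ = −t(E₁₃+E₅₇), and A₂ = A₄ = A₆ = A₇ = 0. Then the space {ψ ∈ ℝ⁸ : σ(A_i)·ψ = 0 for all i = 1,…,7} is exactly the four-dimensional linear span of (1,1,0,0,0,0,0,0), (0,0,−1,1,0,0,0,0), (0,0,0,0,1,1,0,0), (0,0,0,0,0,0,−1,1). -/

import Mathlib

open Matrix

noncomputable section

/-- `E8 i j` is the 8×8 skew-symmetric matrix sending the `i`-th basis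
vector to the `j`-th, the `j`-th to minus the `i`-th, and all others to 0. -/
def E8 (i j : Fin 8) : Matrix (Fin 8) (Fin 8) ℝ :=
  Matrix.single j i 1 - Matrix.single i j 1

/-- The matrices `e₁,…,e₇` of the 7-dimensional spin representation on ℝ⁸
(indices shifted to be 0-based). -/
def g : Fin 7 → Matrix (Fin 8) (Fin 8) ℝ :=
  ![E8 0 7 + E8 1 6 - E8 2 5 - E8 3 4,
    -E8 0 6 + E8 1 7 + E8 2 4 - E8 3 5,
    -E8 0 5 + E8 1 4 - E8 2 7 + E8 3 6,
    -E8 0 4 - E8 1 5 - E8 2 6 - E8 3 7,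
    -E8 0 2 - E8 1 3 + E8 4 6 + E8 5 7,
    E8 0 3 - E8 1 2 - E8 4 7 + E8 5 6,
    E8 0 1 - E8 2 3 - E8 4 5 + E8 6 7]

/-- 7×7 version of `E_{ij}`. -/
def E7 (i j : Fin 7) : Matrix (Fin 7) (Fin 7) ℝ :=
  Matrix.single j i 1 - Matrix.single i j 1

/-- The spin lift `σ(A) = (1/2) Σ_{p<q} a_{pq} e_p e_q` of a skew-symmetric
7×7 matrix `A = Σ_{p<q} a_{pq} E_{pq}` (so that `a_{pq} = A q p` for `p < q`). -/
def spinLift (A : Matrix (Fin 7) (Fin 7) ℝ) : Matrix (Fin 8) (Fin 8) ℝ :=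
  (1/2 : ℝ) • ∑ p : Fin 7, ∑ q : Fin 7, if p < q then A q p • (g p * g q) else 0

/-- Clifford action of the interior product `e_i ⌟ e_{abc}` (for `a<b<c`). -/
def contr (i a b c : Fin 7) : Matrix (Fin 8) (Fin 8) ℝ :=
  (if i = a then g b * g c else 0) - (if i = b then g a * g c else 0) +
    (if i = c then g a * g b else 0)

/-- The ordered index triples (0-based) of the eleven basis 3-forms spanning `Λ³₁₁`:
`e₁₂₅, e₁₃₆, e₂₄₆, e₃₄₅, e₁₂₆, e₃₄₆, e₁₃₅, e₂₄₅, e₁₄₇, e₅₆₇, e₂₃₇`. -/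
def tri : Fin 11 → Fin 7 × Fin 7 × Fin 7 :=
  ![(0,1,4),(0,2,5),(1,3,5),(2,3,4),(0,1,5),(2,3,5),(0,2,4),(1,3,4),(0,3,6),(4,5,6),(1,2,6)]

/-- For `T = Σ_k c_k e_{tri k} ∈ Λ³₁₁`, the Clifford action `Cl(e_i ⌟ T)`. -/
def clContr (c : Fin 11 → ℝ) (i : Fin 7) : Matrix (Fin 8) (Fin 8) ℝ :=
  ∑ k : Fin 11, c k • contr i (tri k).1 (tri k).2.1 (tri k).2.2

/-- `ψ` is `∇ᵀ`-parallel for connection matrices `A` and torsion `T ∈ Λ³₁₁`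
with coefficient vector `c`. -/
def IsParallel (A : Fin 7 → Matrix (Fin 7) (Fin 7) ℝ) (c : Fin 11 → ℝ)
    (ψ : Fin 8 → ℝ) : Prop :=
  ∀ i : Fin 7, (spinLift (A i)).mulVec ψ + (clContr c i).mulVec ψ = 0

/-- Connection matrices of example (1). -/
def Aex1 (t : ℝ) : Fin 7 → Matrix (Fin 7) (Fin 7) ℝ :=
  ![(-t) • (E7 0 6 + E7 2 4), 0,
    (-t) • (E7 0 4 - E7 2 6), 0,
    (-t) • (E7 0 2 + E7 4 6), 0, 0]

/-!
`σ(A₁) = -(t/2)(e₁e₇ + e₃e₅)` sends `ψ` to `t/2` times a vector whose entries are, up to sign,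
the four combinations `ψ₁ - ψ₂`, `ψ₃ + ψ₄`, `ψ₅ - ψ₆`, `ψ₇ + ψ₈`; since `t ≠ 0` its kernel is the
common zero set of these combinations, which is exactly the given span. The images of `ψ` under
`σ(A₃)` and `σ(A₅)` are built from the same four combinations, so they vanish on that span too,
and the remaining `A_i` are zero.
-/

lemma spinLift_add (A B : Matrix (Fin 7) (Fin 7) ℝ) :
    spinLift (A + B) = spinLift A + spinLift B := by
  simp only [spinLift, ← smul_add, ← Finset.sum_add_distrib, Matrix.add_apply, ← ite_add_zero,
    add_smul]

lemma spinLift_smul (c : ℝ) (A : Matrix (Fin 7) (Fin 7) ℝ) :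
    spinLift (c • A) = c • spinLift A := by
  simp only [spinLift, Finset.smul_sum, Matrix.smul_apply, smul_ite, smul_zero, smul_eq_mul,
    mul_smul, smul_comm c (1 / 2 : ℝ)]

lemma spinLift_zero : spinLift 0 = 0 := by
  simpa using spinLift_smul 0 0

lemma spinLift_sub (A B : Matrix (Fin 7) (Fin 7) ℝ) :
    spinLift (A - B) = spinLift A - spinLift B := by
  rw [sub_eq_add_neg, spinLift_add, ← neg_one_smul ℝ B, spinLift_smul, neg_one_smul,
    sub_eq_add_neg]

lemma spinLift_E7 {p q : Fin 7} (hpq : p < q) :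
    spinLift (E7 p q) = (1 / 2 : ℝ) • (g p * g q) := by
  unfold spinLift E7
  congr 1
  rw [Fintype.sum_eq_single p, Fintype.sum_eq_single q]
  · simp [hpq, hpq.ne]
  · intro r hr
    simp [hr.symm, hpq.ne']
  · intro b hb
    refine Finset.sum_eq_zero fun r _ => ?_
    simp only [Matrix.sub_apply, Matrix.single_apply]
    split_ifs <;> simp_all
    omega

lemma E8_mulVec (i j : Fin 8) (ψ : Fin 8 → ℝ) :
    E8 i j *ᵥ ψ = Pi.single j (ψ i) - Pi.single i (ψ j) := by
  ext k
  simp [E8, sub_mulVec, Matrix.single_mulVec, Pi.single_apply, Function.update_apply]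

lemma mem_span_spinors_iff (ψ : Fin 8 → ℝ) : ψ ∈ Submodule.span ℝ
        {(![1, 1, 0, 0, 0, 0, 0, 0] : Fin 8 → ℝ),
         ![0, 0, -1, 1, 0, 0, 0, 0],
         ![0, 0, 0, 0, 1, 1, 0, 0],
         ![0, 0, 0, 0, 0, 0, -1, 1]} ↔
      ψ 0 - ψ 1 = 0 ∧ ψ 2 + ψ 3 = 0 ∧ ψ 4 - ψ 5 = 0 ∧ ψ 6 + ψ 7 = 0 := by
  simp only [Submodule.mem_span_insert, Submodule.mem_span_singleton]
  constructor
  · rintro ⟨a, _, ⟨b, _, ⟨c, _, ⟨d, rfl⟩, rfl⟩, rfl⟩, rfl⟩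
    simp
  · rintro ⟨h01, h23, h45, h67⟩
    refine ⟨ψ 0, _, ⟨-ψ 2, _, ⟨ψ 4, _, ⟨-ψ 6, rfl⟩, rfl⟩, rfl⟩, ?_⟩
    ext k
    fin_cases k <;> simp <;> linarith

lemma g_zero_mulVec (ψ : Fin 8 → ℝ) :
    g 0 *ᵥ ψ = ![-ψ 7, -ψ 6, ψ 5, ψ 4, -ψ 3, -ψ 2, ψ 1, ψ 0] := by
  ext k
  fin_cases k <;> simp [g, add_mulVec, sub_mulVec, E8_mulVec]

lemma g_two_mulVec (ψ : Fin 8 → ℝ) :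
    g 2 *ᵥ ψ = ![ψ 5, -ψ 4, ψ 7, -ψ 6, ψ 1, -ψ 0, ψ 3, -ψ 2] := by
  ext k
  fin_cases k <;> simp [g, add_mulVec, sub_mulVec, neg_mulVec, E8_mulVec]

lemma g_four_mulVec (ψ : Fin 8 → ℝ) :
    g 4 *ᵥ ψ = ![ψ 2, ψ 3, -ψ 0, -ψ 1, -ψ 6, -ψ 7, ψ 4, ψ 5] := by
  ext k
  fin_cases k <;> simp [g, add_mulVec, sub_mulVec, neg_mulVec, E8_mulVec]

lemma g_six_mulVec (ψ : Fin 8 → ℝ) :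
    g 6 *ᵥ ψ = ![-ψ 1, ψ 0, ψ 3, -ψ 2, ψ 5, -ψ 4, -ψ 7, ψ 6] := by
  ext k
  fin_cases k <;> simp [g, add_mulVec, sub_mulVec, E8_mulVec]

lemma spinLift_Aex1_zero (t : ℝ) :
    spinLift (Aex1 t 0) = (-(t / 2)) • (g 0 * g 6 + g 2 * g 4) := by
  rw [show Aex1 t 0 = (-t) • (E7 0 6 + E7 2 4) from rfl, spinLift_smul, spinLift_add,
    spinLift_E7 (by decide : (0 : Fin 7) < 6), spinLift_E7 (by decide : (2 : Fin 7) < 4)]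
  module

lemma spinLift_Aex1_two (t : ℝ) :
    spinLift (Aex1 t 2) = (-(t / 2)) • (g 0 * g 4 - g 2 * g 6) := by
  rw [show Aex1 t 2 = (-t) • (E7 0 4 - E7 2 6) from rfl, spinLift_smul, spinLift_sub,
    spinLift_E7 (by decide : (0 : Fin 7) < 4), spinLift_E7 (by decide : (2 : Fin 7) < 6)]
  module

lemma spinLift_Aex1_four (t : ℝ) :
    spinLift (Aex1 t 4) = (-(t / 2)) • (g 0 * g 2 + g 4 * g 6) := by
  rw [show Aex1 t 4 = (-t) • (E7 0 2 + E7 4 6) from rfl, spinLift_smul, spinLift_add,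
    spinLift_E7 (by decide : (0 : Fin 7) < 2), spinLift_E7 (by decide : (4 : Fin 7) < 6)]
  module

lemma spinLift_Aex1_zero_mulVec (t : ℝ) (ψ : Fin 8 → ℝ) :
    spinLift (Aex1 t 0) *ᵥ ψ = (t / 2) • ![ψ 6 + ψ 7, -(ψ 6 + ψ 7), ψ 4 - ψ 5, ψ 4 - ψ 5,
      -(ψ 2 + ψ 3), ψ 2 + ψ 3, -(ψ 0 - ψ 1), -(ψ 0 - ψ 1)] := by
  rw [spinLift_Aex1_zero]
  simp only [smul_mulVec, add_mulVec, ← mulVec_mulVec, g_zero_mulVec, g_two_mulVec,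
    g_four_mulVec, g_six_mulVec]
  ext k
  fin_cases k <;> simp <;> ring

lemma spinLift_Aex1_two_mulVec (t : ℝ) (ψ : Fin 8 → ℝ) :
    spinLift (Aex1 t 2) *ᵥ ψ = (t / 2) • ![-(ψ 4 - ψ 5), ψ 4 - ψ 5, ψ 6 + ψ 7, ψ 6 + ψ 7,
      ψ 0 - ψ 1, -(ψ 0 - ψ 1), -(ψ 2 + ψ 3), -(ψ 2 + ψ 3)] := by
  rw [spinLift_Aex1_two]
  simp only [smul_mulVec, sub_mulVec, ← mulVec_mulVec, g_zero_mulVec, g_two_mulVec,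
    g_four_mulVec, g_six_mulVec]
  ext k
  fin_cases k <;> simp <;> ring

lemma spinLift_Aex1_four_mulVec (t : ℝ) (ψ : Fin 8 → ℝ) :
    spinLift (Aex1 t 4) *ᵥ ψ = (t / 2) • ![-(ψ 2 + ψ 3), ψ 2 + ψ 3, ψ 0 - ψ 1, ψ 0 - ψ 1,
      -(ψ 6 + ψ 7), ψ 6 + ψ 7, ψ 4 - ψ 5, ψ 4 - ψ 5] := by
  rw [spinLift_Aex1_four]
  simp only [smul_mulVec, add_mulVec, ← mulVec_mulVec, g_zero_mulVec, g_two_mulVec,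
    g_four_mulVec, g_six_mulVec]
  ext k
  fin_cases k <;> simp <;> ring

/-- four invariant parallel spinors for example (1). -/
theorem stmt17 (t : ℝ) (ht : 0 < t) :
    ∀ ψ : Fin 8 → ℝ, (∀ i : Fin 7, (spinLift (Aex1 t i)).mulVec ψ = 0) ↔
      ψ ∈ Submodule.span ℝ
        {(![1, 1, 0, 0, 0, 0, 0, 0] : Fin 8 → ℝ),
         ![0, 0, -1, 1, 0, 0, 0, 0],
         ![0, 0, 0, 0, 1, 1, 0, 0],
         ![0, 0, 0, 0, 0, 0, -1, 1]} := by
  intro ψ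
  rw [mem_span_spinors_iff]
  constructor
  · intro h
    have hv := h 0
    rw [spinLift_Aex1_zero_mulVec, smul_eq_zero, or_iff_right (by positivity)] at hv
    simp only [funext_iff, Fin.forall_fin_succ, Matrix.cons_val_zero, Matrix.cons_val_succ,
      Pi.zero_apply, IsEmpty.forall_iff, and_true] at hv
    obtain ⟨h67, -, h45, -, -, h23, h01, -⟩ := hv
    refine ⟨?_, ?_, ?_, ?_⟩ <;> linarith
  · rintro ⟨h01, h23, h45, h67⟩ i
    have hA : Aex1 t 1 = 0 ∧ Aex1 t 3 = 0 ∧ Aex1 t 5 = 0 ∧ Aex1 t 6 = 0 := ⟨rfl, rfl, rfl, rfl⟩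
    fin_cases i <;> simp [spinLift_Aex1_zero_mulVec, spinLift_Aex1_two_mulVec,
      spinLift_Aex1_four_mulVec, hA, spinLift_zero, h01, h23, h45, h67]
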